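/- arXiv:1512.07797 — 2 statements merged into one kernel-verified Lean document; each statement's English description precedes it below -/
import Mathlib

section
/- Let l : 2^V → ℝ be modular and increasing with l(∅) = 0. Then for every s ∈ ℝ^p, the Lovász hinge (increasing case) satisfies L1_l(s) = Σ_{j=1}^p max(s_j, 0) · l({j}). In particular, for the Hamming loss l(A) = |A|, the Lovász hinge coincides with the additive hinge loss of an SVM: L1_l(s) = Σ_{j=1}^p max(s_j, 0). -/
open Finset

/-- The chain {σ₁,…,σⱼ}: the image under σ of the first j indices. -/
def chainSet {p : ℕ} (σ : Equiv.Perm (Fin p)) (j : ℕ) : Finset (Fin p) :=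
  (Finset.univ.filter fun k : Fin p => (k : ℕ) < j).image σ

/-- G_l(σ, s) = Σ_{j=1}^p s_{σ_j}·(l({σ₁,…,σⱼ}) − l({σ₁,…,σ_{j−1}})). -/
def lovaszSum {p : ℕ} (l : Finset (Fin p) → ℝ) (σ : Equiv.Perm (Fin p))
    (s : Fin p → ℝ) : ℝ :=
  ∑ j : Fin p, s (σ j) * (l (chainSet σ ((j : ℕ) + 1)) - l (chainSet σ (j : ℕ)))

/-- Indicator vector 1_A ∈ {0,1}^p of A ⊆ V. -/
def indic {p : ℕ} (A : Finset (Fin p)) : Fin p → ℝ := fun i => if i ∈ A then 1 else 0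

/-- A permutation sorting s in decreasing order: s_{π_1} ≥ … ≥ s_{π_p}. -/
def SortsDesc {p : ℕ} (π : Equiv.Perm (Fin p)) (s : Fin p → ℝ) : Prop :=
  ∀ j k : Fin p, j ≤ k → s (π k) ≤ s (π j)

/-- A canonical permutation sorting s in decreasing order. -/
noncomputable def sortDesc {p : ℕ} (s : Fin p → ℝ) : Equiv.Perm (Fin p) :=
  Tuple.sort (fun i => -s i)

/-- The Lovász extension ℓ̂(s) = G_l(π, s) for a permutation π sorting s
decreasingly (independent of the choice of such π). -/
noncomputable def lovaszExt {p : ℕ} (l : Finset (Fin p) → ℝ) (s : Fin p → ℝ) : ℝ :=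
  lovaszSum l (sortDesc s) s

/-- Submodularity: l(A) + l(B) ≥ l(A ∪ B) + l(A ∩ B). -/
def Submodular {p : ℕ} (l : Finset (Fin p) → ℝ) : Prop :=
  ∀ A B : Finset (Fin p), l (A ∪ B) + l (A ∩ B) ≤ l A + l B

/-- The slack-rescaling surrogate S_l(s) = max_{I⊆V} l(I)·(1 − 2 Σ_{i∈I}(1 − s_i)). -/
noncomputable def slackSur {p : ℕ} (l : Finset (Fin p) → ℝ) (s : Fin p → ℝ) : ℝ :=
  Finset.univ.sup' Finset.univ_nonempty
    (fun I : Finset (Fin p) => l I * (1 - 2 * ∑ i ∈ I, (1 - s i)))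

/-- The margin-rescaling surrogate M_l(s) = max_{I⊆V} ( l(I) − 2 Σ_{i∈I}(1 − s_i) ). -/
noncomputable def marginSur {p : ℕ} (l : Finset (Fin p) → ℝ) (s : Fin p → ℝ) : ℝ :=
  Finset.univ.sup' Finset.univ_nonempty
    (fun I : Finset (Fin p) => l I - 2 * ∑ i ∈ I, (1 - s i))

/-- The Lovász hinge, general (non-monotonic) case. -/
noncomputable def hingeGen {p : ℕ} (l : Finset (Fin p) → ℝ) (s : Fin p → ℝ) : ℝ :=
  Finset.univ.sup' Finset.univ_nonempty
    (fun σ : Equiv.Perm (Fin p) => max 0 (lovaszSum l σ s))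

/-- The Lovász hinge, increasing case (componentwise thresholding). -/
noncomputable def hingeInc {p : ℕ} (l : Finset (Fin p) → ℝ) (s : Fin p → ℝ) : ℝ :=
  Finset.univ.sup' Finset.univ_nonempty
    (fun σ : Equiv.Perm (Fin p) =>
      ∑ j : Fin p, max (s (σ j)) 0 *
        (l (chainSet σ ((j : ℕ) + 1)) - l (chainSet σ (j : ℕ))))

/-! By modularity, each increment l({σ₁,…,σⱼ}) − l({σ₁,…,σⱼ₋₁}) of a chain equals l({σⱼ}),
so every permutation σ gives the same sum Σⱼ max(s_{σⱼ}, 0)·l({σⱼ}), a reindexing of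
Σⱼ max(sⱼ, 0)·l({j}); the maximum over σ is therefore that common value. The cardinality is
modular, which gives the Hamming case. -/

lemma chainSet_succ {p : ℕ} (σ : Equiv.Perm (Fin p)) (j : Fin p) :
    chainSet σ ((j : ℕ) + 1) = insert (σ j) (chainSet σ (j : ℕ)) := by
  have hfilter : (univ.filter fun k : Fin p => (k : ℕ) < (j : ℕ) + 1)
      = insert j (univ.filter fun k : Fin p => (k : ℕ) < (j : ℕ)) := by
    ext k
    simp only [mem_filter, mem_univ, true_and, mem_insert, Fin.ext_iff]
    omega
  rw [chainSet, hfilter, image_insert, chainSet]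

lemma apply_notMem_chainSet {p : ℕ} (σ : Equiv.Perm (Fin p)) (j : Fin p) :
    σ j ∉ chainSet σ (j : ℕ) := by
  simp [chainSet, σ.injective.eq_iff]

lemma sub_eq_of_modular_of_notMem {α M : Type*} [DecidableEq α] [AddCommGroup M]
    {l : Finset α → M} (hmod : ∀ A B : Finset α, l (A ∪ B) + l (A ∩ B) = l A + l B)
    (h0 : l ∅ = 0) {a : α} {A : Finset α} (ha : a ∉ A) :
    l (insert a A) - l A = l {a} := by
  have h := hmod {a} A
  rw [← insert_eq, singleton_inter_of_notMem ha, h0, add_zero] at h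
  rw [h, add_sub_cancel_right]

lemma hingeInc_of_modular {p : ℕ} {l : Finset (Fin p) → ℝ}
    (hmod : ∀ A B : Finset (Fin p), l (A ∪ B) + l (A ∩ B) = l A + l B) (h0 : l ∅ = 0)
    (s : Fin p → ℝ) :
    hingeInc l s = ∑ j : Fin p, max (s j) 0 * l {j} := by
  have hchain : ∀ (σ : Equiv.Perm (Fin p)) (j : Fin p),
      l (chainSet σ ((j : ℕ) + 1)) - l (chainSet σ (j : ℕ)) = l {σ j} := fun σ j => by
    rw [chainSet_succ]
    exact sub_eq_of_modular_of_notMem hmod h0 (apply_notMem_chainSet σ j)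
  have hperm : ∀ σ : Equiv.Perm (Fin p),
      ∑ j : Fin p, max (s (σ j)) 0 * (l (chainSet σ ((j : ℕ) + 1)) - l (chainSet σ (j : ℕ)))
        = ∑ j : Fin p, max (s j) 0 * l {j} := fun σ => by
    simp only [hchain]
    exact Equiv.sum_comp σ fun j => max (s j) 0 * l {j}
  simp only [hingeInc, hperm, sup'_const]

theorem hingeInc_modular_eq_additive_hinge_general (p : ℕ)
    (l : Finset (Fin p) → ℝ)
    (hmod : ∀ A B : Finset (Fin p), l (A ∪ B) + l (A ∩ B) = l A + l B)
    (h0 : l ∅ = 0) :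
    (∀ s : Fin p → ℝ, hingeInc l s = ∑ j : Fin p, max (s j) 0 * l {j}) ∧
      ∀ s : Fin p → ℝ,
        hingeInc (fun A : Finset (Fin p) => (A.card : ℝ)) s =
          ∑ j : Fin p, max (s j) 0 := by
  refine ⟨hingeInc_of_modular hmod h0, fun s => ?_⟩
  have hcard : ∀ A B : Finset (Fin p),
      ((A ∪ B).card : ℝ) + (A ∩ B).card = A.card + B.card := fun A B =>
    mod_cast card_union_add_card_inter A B
  simpa using hingeInc_of_modular (l := fun A => (A.card : ℝ)) hcard (by simp) s

/-- for modular increasing l with l(∅)=0 the Lovász hinge is the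
weighted additive hinge loss; for the Hamming loss l(A)=|A| it coincides with
the additive SVM hinge loss. -/
theorem hingeInc_modular_eq_additive_hinge (p : ℕ) (hp : 1 ≤ p)
    (l : Finset (Fin p) → ℝ)
    (hmod : ∀ A B : Finset (Fin p), l (A ∪ B) + l (A ∩ B) = l A + l B)
    (hinc : ∀ A B : Finset (Fin p), A ⊆ B → l A ≤ l B) (h0 : l ∅ = 0) :
    (∀ s : Fin p → ℝ, hingeInc l s = ∑ j : Fin p, max (s j) 0 * l {j}) ∧
      ∀ s : Fin p → ℝ,
        hingeInc (fun A : Finset (Fin p) => (A.card : ℝ)) s =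
          ∑ j : Fin p, max (s j) 0 :=
  hingeInc_modular_eq_additive_hinge_general p l hmod h0
end

section
/- Let l : 2^V → ℝ be submodular with l(∅) = 0, and let f : [0,1]^p → ℝ be a convex function with f(1_A) ≤ l(A) for every A ⊆ V. Then f(s) ≤ ℓ̂(s) for every s ∈ [0,1]^p; that is, the Lovász extension of a submodular function dominates every convex underestimator agreeing with l at the vertices of the unit cube (it is the convex closure of l). -/
open Finset

/-!
Let `σ` sort `s` decreasingly and put `c₀ = 1`, `cₖ₊₁ = s σₖ`, `c_{p+1} = 0`; this sequence is
antitone on the cube. Then `s` is the convex combination `∑ₖ (cₖ - cₖ₊₁) • 1_{Sₖ}` of the indicators of the chain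
`∅ = S₀ ⊆ S₁ ⊆ … ⊆ S_p = V`, `Sₖ = {σ₀, …, σ_{k-1}}`. Since `G_l(σ, ·)` is linear with
`G_l(σ, 1_{Sₖ}) = l(Sₖ) - l(∅)`, the same weights give `ℓ̂(s) = ∑ₖ (cₖ - cₖ₊₁) l(Sₖ)`, and Jensen's
inequality for `f` together with `f(1_{Sₖ}) ≤ l(Sₖ)` gives `f(s) ≤ ℓ̂(s)`.
-/

section Chain

variable {p : ℕ} (σ : Equiv.Perm (Fin p))

theorem mem_chainSet {i : Fin p} {j : ℕ} : i ∈ chainSet σ j ↔ (σ.symm i : ℕ) < j := by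
  simp only [chainSet, mem_image, mem_filter, mem_univ, true_and]
  exact ⟨by rintro ⟨k, hk, rfl⟩; simpa using hk, fun h => ⟨σ.symm i, h, σ.apply_symm_apply i⟩⟩

theorem chainSet_zero : chainSet σ 0 = ∅ := by
  ext i
  simp [mem_chainSet]

theorem indic_chainSet_apply (j : ℕ) (i : Fin p) :
    indic (chainSet σ j) i = if (σ.symm i : ℕ) < j then 1 else 0 := by
  simp only [indic, mem_chainSet]

variable (l : Finset (Fin p) → ℝ)

theorem lovaszSum_sum_smul {ι : Type*} (t : Finset ι) (w : ι → ℝ) (x : ι → Fin p → ℝ) :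
    lovaszSum l σ (∑ k ∈ t, w k • x k) = ∑ k ∈ t, w k * lovaszSum l σ (x k) := by
  simp only [lovaszSum, Finset.sum_apply, Pi.smul_apply, smul_eq_mul, Finset.sum_mul,
    Finset.mul_sum, mul_assoc]
  exact Finset.sum_comm

theorem lovaszSum_indic_chainSet {k : ℕ} (hk : k ≤ p) :
    lovaszSum l σ (indic (chainSet σ k)) = l (chainSet σ k) - l ∅ := by
  simp only [lovaszSum, indic_chainSet_apply, Equiv.symm_apply_apply, ite_mul, one_mul, zero_mul]
  rw [Fin.sum_univ_eq_sum_range (fun j => if j < k then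
    l (chainSet σ (j + 1)) - l (chainSet σ j) else 0), ← Finset.sum_filter]
  have hfilter : (range p).filter (· < k) = range k := by
    ext j
    simp only [mem_filter, mem_range]
    omega
  rw [hfilter, Finset.sum_range_sub (fun j => l (chainSet σ j)), chainSet_zero]

variable (s : Fin p → ℝ)

def chainLevel : ℕ → ℝ
  | 0 => 1
  | k + 1 => if h : k < p then s (σ ⟨k, h⟩) else 0

def chainWeight (k : ℕ) : ℝ := chainLevel σ s k - chainLevel σ s (k + 1)

theorem sum_chainWeight : ∑ k ∈ range (p + 1), chainWeight σ s k = 1 := by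
  simp only [chainWeight]
  rw [Finset.sum_range_sub']
  simp [chainLevel]

theorem sum_chainWeight_smul_indic_chainSet :
    ∑ k ∈ range (p + 1), chainWeight σ s k • indic (chainSet σ k) = s := by
  funext i
  set m : ℕ := (σ.symm i : ℕ)
  have hm : m < p := (σ.symm i).isLt
  have hfilter : (range (p + 1)).filter (m < ·) = Ico (m + 1) (p + 1) := by
    ext k
    simp only [mem_filter, mem_range, mem_Ico]
    omega
  simp only [Finset.sum_apply, Pi.smul_apply, indic_chainSet_apply, smul_eq_mul, mul_ite,
    mul_one, mul_zero, chainWeight]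
  rw [← Finset.sum_filter, hfilter, Finset.sum_Ico_eq_sub _ (by omega),
    Finset.sum_range_sub', Finset.sum_range_sub']
  simp [chainLevel, hm, m]

theorem chainLevel_antitone (hσ : SortsDesc σ s) (hs : s ∈ Set.Icc 0 1) :
    Antitone (chainLevel σ s) := by
  refine antitone_nat_of_succ_le fun k => ?_
  rcases k with _ | k
  · by_cases hp : 0 < p
    · simpa [chainLevel, hp] using hs.2 (σ ⟨0, hp⟩)
    · simp [chainLevel, hp]
  · simp only [chainLevel]
    split_ifs with h₁ h₀ h₀
    · exact hσ _ _ (Fin.mk_le_mk.2 k.le_succ)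
    · omega
    · exact hs.1 _
    · rfl

theorem chainWeight_nonneg (hσ : SortsDesc σ s) (hs : s ∈ Set.Icc 0 1) (k : ℕ) :
    0 ≤ chainWeight σ s k :=
  sub_nonneg.2 (chainLevel_antitone σ s hσ hs k.le_succ)

theorem lovaszSum_eq_sum_chainWeight_mul :
    lovaszSum l σ s = ∑ k ∈ range (p + 1), chainWeight σ s k * l (chainSet σ k) - l ∅ := by
  conv_lhs => rw [← sum_chainWeight_smul_indic_chainSet σ s]
  rw [lovaszSum_sum_smul, Finset.sum_congr rfl fun k hk =>
    congrArg _ (lovaszSum_indic_chainSet σ l (Nat.lt_succ_iff.1 (mem_range.1 hk)))]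
  simp only [mul_sub, Finset.sum_sub_distrib, ← Finset.sum_mul, sum_chainWeight, one_mul]

end Chain

theorem sortsDesc_sortDesc {p : ℕ} (s : Fin p → ℝ) : SortsDesc (sortDesc s) s :=
  fun _ _ hjk => neg_le_neg_iff.1 (Tuple.monotone_sort (fun i => -s i) hjk)

theorem indic_mem_Icc {p : ℕ} (A : Finset (Fin p)) : indic A ∈ Set.Icc (0 : Fin p → ℝ) 1 :=
  ⟨fun i => by unfold indic; split_ifs <;> norm_num,
    fun i => by unfold indic; split_ifs <;> norm_num⟩

theorem lovasz_is_convex_closure_general (p : ℕ)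
    (l : Finset (Fin p) → ℝ) (h0 : l ∅ = 0)
    (f : (Fin p → ℝ) → ℝ)
    (hf : ConvexOn ℝ (Set.Icc (0 : Fin p → ℝ) 1) f)
    (hvert : ∀ A : Finset (Fin p), f (indic A) ≤ l A) :
    ∀ s ∈ Set.Icc (0 : Fin p → ℝ) 1, f s ≤ lovaszExt l s := by
  intro s hs
  set σ := sortDesc s
  have hw := chainWeight_nonneg σ s (sortsDesc_sortDesc s) hs
  calc f s = f (∑ k ∈ range (p + 1), chainWeight σ s k • indic (chainSet σ k)) := by
        rw [sum_chainWeight_smul_indic_chainSet]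
    _ ≤ ∑ k ∈ range (p + 1), chainWeight σ s k • f (indic (chainSet σ k)) :=
        hf.map_sum_le (fun k _ => hw k) (sum_chainWeight σ s) fun k _ => indic_mem_Icc _
    _ ≤ ∑ k ∈ range (p + 1), chainWeight σ s k * l (chainSet σ k) :=
        Finset.sum_le_sum fun k _ => mul_le_mul_of_nonneg_left (hvert _) (hw k)
    _ = lovaszExt l s := by
        rw [lovaszExt, lovaszSum_eq_sum_chainWeight_mul, h0, sub_zero]

/-- the Lovász extension of a submodular function dominates every
convex function on [0,1]^p that underestimates l at the vertices of the cube
(it is the convex closure of l). -/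
theorem lovasz_is_convex_closure (p : ℕ) (hp : 1 ≤ p)
    (l : Finset (Fin p) → ℝ) (hsub : Submodular l) (h0 : l ∅ = 0)
    (f : (Fin p → ℝ) → ℝ)
    (hf : ConvexOn ℝ (Set.Icc (0 : Fin p → ℝ) 1) f)
    (hvert : ∀ A : Finset (Fin p), f (indic A) ≤ l A) :
    ∀ s ∈ Set.Icc (0 : Fin p → ℝ) 1, f s ≤ lovaszExt l s :=
  lovasz_is_convex_closure_general p l h0 f hf hvert
end
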